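/- Suppose x_N ≠ M. Then the partition function factorizes as W_{M,N}(u₁,…,u_N|v₁,…,v_M|x₁,…,x_N|a₁₂) = ([a₂₁ − M − N + 1]/[a₂₁ − M + 1]) · ∏_{j=1}^N ([u_j − v_M]/[1]) · W_{M−1,N}(u₁,…,u_N|v₁,…,v_{M−1}|x₁,…,x_N|a₁₂), where a₂₁ = −a₁₂. -/
import Mathlib


open Complex

noncomputable section

/-- The half period magnitude `K₁` for elliptic nome `q`. -/
def Kone (q : ℝ) : ℝ :=
  Real.pi / 2 * ∏' n : ℕ,
    ((1 + q ^ (2 * n + 1)) / (1 - q ^ (2 * n + 1)) *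
      ((1 - q ^ (2 * n + 2)) / (1 + q ^ (2 * n + 2)))) ^ 2

/-- The half period magnitude `K₂` for elliptic nome `q`. -/
def Ktwo (q : ℝ) : ℝ := -(Kone q / Real.pi) * Real.log q

/-- The elliptic theta function `H`. -/
def theta (q : ℝ) (u : ℂ) : ℂ :=
  2 * (q : ℂ) ^ (1 / 4 : ℂ) * Complex.sin (Real.pi * u / (2 * (Kone q : ℂ))) *
    ∏' n : ℕ,
      ((1 - 2 * (q : ℂ) ^ (2 * n + 2) * Complex.cos (Real.pi * u / (Kone q : ℂ)) +
          (q : ℂ) ^ (4 * n + 4)) * (1 - (q : ℂ) ^ (2 * n + 2)))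

/-- The bracket `[u] = H(λu)`. -/
def brak (q : ℝ) (lam : ℂ) (u : ℂ) : ℂ := theta q (lam * u)

/-- Unit vector ê₁. -/
def e1 : ℤ × ℤ := (1, 0)

/-- Unit vector ê₂. -/
def e2 : ℤ × ℤ := (0, 1)

/-- The scalar `a₁₂ = a₁ + a₂ + ω₁₂` attached to a state vector. -/
def aSc (ω12 : ℂ) (a : ℤ × ℤ) : ℂ := (a.1 : ℂ) + (a.2 : ℂ) + ω12

/-- The face weights of the Deguchi-Martin model. -/
def faceW (q : ℝ) (lam ω12 : ℂ) (a b c d : ℤ × ℤ) (u v : ℂ) : ℂ :=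
  if b = a + e1 ∧ c = a + e1 ∧ d = a + e1 + e1 then
    brak q lam (1 + (u - v)) / brak q lam 1
  else if b = a + e2 ∧ c = a + e2 ∧ d = a + e2 + e2 then
    brak q lam (1 - (u - v)) / brak q lam 1
  else if b = a + e2 ∧ c = a + e1 ∧ d = a + e1 + e2 then
    brak q lam (u - v) * brak q lam (aSc ω12 a - 1) / (brak q lam 1 * brak q lam (aSc ω12 a))
  else if b = a + e1 ∧ c = a + e2 ∧ d = a + e1 + e2 then
    brak q lam (u - v) * brak q lam (-aSc ω12 a - 1) / (brak q lam 1 * brak q lam (-aSc ω12 a))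
  else if b = a + e1 ∧ c = a + e1 ∧ d = a + e1 + e2 then
    brak q lam (aSc ω12 a - (u - v)) / brak q lam (aSc ω12 a)
  else if b = a + e2 ∧ c = a + e2 ∧ d = a + e1 + e2 then
    brak q lam (-aSc ω12 a - (u - v)) / brak q lam (-aSc ω12 a)
  else 0

/-- Number of the integers `x₁ < ⋯ < x_N` that are `≤ k`. -/
def btmCount (N : ℕ) (x : ℕ → ℕ) (k : ℕ) : ℕ :=
  ((Finset.Icc 1 N).filter fun j => x j ≤ k).card

open scoped Classical in
/-- The partition function `W_{M,N}(u₁,…,u_N|v₁,…,v_M|x₁,…,x_N|a₁₂)` of the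
Deguchi-Martin model: the sum over all state-vector configurations of the
`N`-row, `M`-column lattice with the prescribed boundary of the product of all
`M·N` face weights. -/
def partW (q : ℝ) (lam ω12 : ℂ) (M N : ℕ) (u v : ℕ → ℂ) (x : ℕ → ℕ)
    (a : ℤ × ℤ) : ℂ :=
  ∑' s : Fin (N + 1) × Fin (M + 1) → ℤ × ℤ,
    if (∀ k : Fin (M + 1), s (0, k) = a + ((k : ℕ) : ℤ) • e1) ∧
       (∀ i : Fin (N + 1), s (i, 0) = a + ((i : ℕ) : ℤ) • e1) ∧
       (∀ i : Fin (N + 1), s (i, Fin.last M) = a + (M : ℤ) • e1 + ((i : ℕ) : ℤ) • e2) ∧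
       (∀ k : Fin (M + 1), s (Fin.last N, k) =
          a + ((N : ℤ) + ((k : ℕ) : ℤ) - (btmCount N x (k : ℕ) : ℤ)) • e1 +
            (btmCount N x (k : ℕ) : ℤ) • e2)
    then
      ∏ i : Fin N, ∏ k : Fin M,
        faceW q lam ω12 (s (i.castSucc, k.castSucc)) (s (i.castSucc, k.succ))
          (s (i.succ, k.castSucc)) (s (i.succ, k.succ)) (u (N - (i : ℕ))) (v ((k : ℕ) + 1))
    else 0

/-! ### Auxiliary lemmas -/


lemma vec_eq (a : ℤ × ℤ) (z w : ℤ) : a + z • e1 + w • e2 = (a.1 + z, a.2 + w) := by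
  simp [e1, e2, Prod.ext_iff]

lemma face_force (q : ℝ) (lam ω12 : ℂ) (a b c d : ℤ × ℤ) (u v : ℂ)
    (h : faceW q lam ω12 a b c d u v ≠ 0) (hbc : b ≠ c) (hd : d = b + e2) :
    b = a + e1 ∧ c = a + e2 := by
  have he : e1 ≠ e2 := by simp [e1, e2]
  unfold faceW at h
  split_ifs at h with h1 h2 h3 h4 h5 h6
  · exact absurd (h1.1.trans h1.2.1.symm) hbc
  · exact absurd (h2.1.trans h2.2.1.symm) hbc
  · exfalso
    rw [h3.2.2, h3.1] at hd
    exact he (add_left_cancel (add_right_cancel hd))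
  · exact ⟨h4.1, h4.2.1⟩
  · exact absurd (h5.1.trans h5.2.1.symm) hbc
  · exact absurd (h6.1.trans h6.2.1.symm) hbc
  · exact absurd rfl h

lemma face_case4 (q : ℝ) (lam ω12 : ℂ) (a : ℤ × ℤ) (u v : ℂ) :
    faceW q lam ω12 a (a + e1) (a + e2) (a + e1 + e2) u v =
      brak q lam (u - v) * brak q lam (-aSc ω12 a - 1) /
        (brak q lam 1 * brak q lam (-aSc ω12 a)) := by
  unfold faceW
  rw [if_neg, if_neg, if_neg, if_pos ⟨rfl, rfl, rfl⟩] <;>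
    · intro h
      simp only [e1, e2, Prod.ext_iff, Prod.fst_add, Prod.snd_add] at h
      omega

lemma telescope (D : ℕ → ℂ) (hD : ∀ j, D j ≠ 0) (n : ℕ) :
    ∏ i ∈ Finset.range n, (D (i + 1) / D i) = D n / D 0 := by
  induction n with
  | zero => simp [div_self (hD 0)]
  | succ n ih =>
      rw [Finset.prod_range_succ, ih, div_mul_div_comm, mul_comm (D 0) (D n),
        mul_div_mul_left _ _ (hD n)]

lemma prod_reflect (N : ℕ) (f : ℕ → ℂ) :
    ∏ i ∈ Finset.range N, f (N - i) = ∏ j ∈ Finset.Icc 1 N, f j := by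
  refine Finset.prod_nbij' (fun i => N - i) (fun j => N - j) ?_ ?_ ?_ ?_ ?_ <;>
    intros a ha <;> simp only [Finset.mem_range, Finset.mem_Icc] at * <;> omega

/-- The extension of a configuration of the `(M'+1)`-column lattice (with `M'` faces per row)
to the `(M'+2)`-column lattice by the forced rightmost column. -/
def extCfg (N M' : ℕ) (a : ℤ × ℤ) (t : Fin (N + 1) × Fin (M' + 1) → ℤ × ℤ) :
    Fin (N + 1) × Fin (M' + 1 + 1) → ℤ × ℤ := fun p =>
  if h : (p.2 : ℕ) < M' + 1 then t (p.1, ⟨(p.2 : ℕ), h⟩)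
  else a + ((M' + 1 : ℕ) : ℤ) • e1 + ((p.1 : ℕ) : ℤ) • e2

lemma extCfg_castSucc (N M' : ℕ) (a : ℤ × ℤ) (t : Fin (N + 1) × Fin (M' + 1) → ℤ × ℤ)
    (i : Fin (N + 1)) (k : Fin (M' + 1)) :
    extCfg N M' a t (i, k.castSucc) = t (i, k) := by
  have hk : ((k.castSucc : Fin (M' + 1 + 1)) : ℕ) < M' + 1 := by simp [k.isLt]
  simp only [extCfg]
  rw [dif_pos hk]
  congr 1

lemma extCfg_last (N M' : ℕ) (a : ℤ × ℤ) (t : Fin (N + 1) × Fin (M' + 1) → ℤ × ℤ)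
    (i : Fin (N + 1)) :
    extCfg N M' a t (i, Fin.last (M' + 1)) =
      a + ((M' + 1 : ℕ) : ℤ) • e1 + ((i : ℕ) : ℤ) • e2 := by
  simp only [extCfg]
  rw [dif_neg (by simp)]

lemma extCfg_inj (N M' : ℕ) (a : ℤ × ℤ) : Function.Injective (extCfg N M' a) := by
  intro t t' h
  funext p
  have := congrFun h (p.1, p.2.castSucc)
  rwa [extCfg_castSucc, extCfg_castSucc] at this

open scoped Classical in
lemma key_step (q : ℝ) (lam ω12 : ℂ) (N M' : ℕ)
    (u v : ℕ → ℂ) (x : ℕ → ℕ) (a : ℤ × ℤ)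
    (hbr1 : brak q lam 1 ≠ 0)
    (hbrA' : ∀ b : ℤ × ℤ, brak q lam (-aSc ω12 b) ≠ 0)
    (hb1 : btmCount N x M' = N) (hb2 : btmCount N x (M' + 1) = N)
    (t : Fin (N + 1) × Fin (M' + 1) → ℤ × ℤ) :
    (if (∀ k : Fin (M' + 1 + 1), extCfg N M' a t (0, k) = a + ((k : ℕ) : ℤ) • e1) ∧
        (∀ i : Fin (N + 1), extCfg N M' a t (i, 0) = a + ((i : ℕ) : ℤ) • e1) ∧
        (∀ i : Fin (N + 1), extCfg N M' a t (i, Fin.last (M' + 1)) =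
          a + ((M' + 1 : ℕ) : ℤ) • e1 + ((i : ℕ) : ℤ) • e2) ∧
        (∀ k : Fin (M' + 1 + 1), extCfg N M' a t (Fin.last N, k) =
          a + ((N : ℤ) + ((k : ℕ) : ℤ) - (btmCount N x (k : ℕ) : ℤ)) • e1 +
            (btmCount N x (k : ℕ) : ℤ) • e2)
     then
       ∏ i : Fin N, ∏ k : Fin (M' + 1),
         faceW q lam ω12 (extCfg N M' a t (i.castSucc, k.castSucc))
           (extCfg N M' a t (i.castSucc, k.succ)) (extCfg N M' a t (i.succ, k.castSucc))
           (extCfg N M' a t (i.succ, k.succ)) (u (N - (i : ℕ))) (v ((k : ℕ) + 1))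
     else 0) =
      (brak q lam (-aSc ω12 a - ((M' + 1 : ℕ) : ℂ) - (N : ℂ) + 1) /
          brak q lam (-aSc ω12 a - ((M' + 1 : ℕ) : ℂ) + 1) *
        ∏ j ∈ Finset.Icc 1 N, brak q lam (u j - v (M' + 1)) / brak q lam 1) *
      (if (∀ k : Fin (M' + 1), t (0, k) = a + ((k : ℕ) : ℤ) • e1) ∧
          (∀ i : Fin (N + 1), t (i, 0) = a + ((i : ℕ) : ℤ) • e1) ∧
          (∀ i : Fin (N + 1), t (i, Fin.last M') =
            a + (M' : ℤ) • e1 + ((i : ℕ) : ℤ) • e2) ∧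
          (∀ k : Fin (M' + 1), t (Fin.last N, k) =
            a + ((N : ℤ) + ((k : ℕ) : ℤ) - (btmCount N x (k : ℕ) : ℤ)) • e1 +
              (btmCount N x (k : ℕ) : ℤ) • e2)
       then
         ∏ i : Fin N, ∏ k : Fin M',
           faceW q lam ω12 (t (i.castSucc, k.castSucc)) (t (i.castSucc, k.succ))
             (t (i.succ, k.castSucc)) (t (i.succ, k.succ)) (u (N - (i : ℕ))) (v ((k : ℕ) + 1))
       else 0) := by
  have hs1 : ∀ (i : Fin (N + 1)) (k : Fin (M' + 1)),
      extCfg N M' a t (i, k.castSucc) = t (i, k) := extCfg_castSucc N M' a t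
  have hs2 : ∀ i : Fin (N + 1), extCfg N M' a t (i, Fin.last (M' + 1)) =
      a + ((M' + 1 : ℕ) : ℤ) • e1 + ((i : ℕ) : ℤ) • e2 := extCfg_last N M' a t
  have hDne : ∀ j : ℕ, brak q lam (-aSc ω12 a - (M' : ℂ) - (j : ℂ)) ≠ 0 := by
    intro j
    have h := hbrA' (a.1 + (M' : ℤ) + (j : ℤ), a.2)
    have harg : -aSc ω12 ((a.1 + (M' : ℤ) + (j : ℤ), a.2) : ℤ × ℤ) =
        -aSc ω12 a - (M' : ℂ) - (j : ℂ) := by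
      simp only [aSc]
      push_cast
      ring
    rwa [harg] at h
  split_ifs with hbig hsm hsm
  · -- both boundary conditions hold: the main computation
    obtain ⟨hT, hL, hR, hB⟩ := hsm
    have hface : ∀ i : Fin N,
        faceW q lam ω12 (extCfg N M' a t (i.castSucc, (Fin.last M').castSucc))
          (extCfg N M' a t (i.castSucc, (Fin.last M').succ))
          (extCfg N M' a t (i.succ, (Fin.last M').castSucc))
          (extCfg N M' a t (i.succ, (Fin.last M').succ))
          (u (N - (i : ℕ))) (v ((Fin.last M' : ℕ) + 1)) =
        brak q lam (u (N - (i : ℕ)) - v (M' + 1)) / brak q lam 1 *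
          (brak q lam (-aSc ω12 a - (M' : ℂ) - (((i : ℕ) + 1 : ℕ) : ℂ)) /
            brak q lam (-aSc ω12 a - (M' : ℂ) - (((i : ℕ) : ℕ) : ℂ))) := by
      intro i
      rw [Fin.succ_last, hs1, hs1, hs2, hs2, hR, hR]
      simp only [Fin.coe_castSucc, Fin.val_succ, Fin.val_last]
      have hbv : a + ((M' + 1 : ℕ) : ℤ) • e1 + (((i : ℕ) : ℕ) : ℤ) • e2
          = a + (M' : ℤ) • e1 + (((i : ℕ) : ℕ) : ℤ) • e2 + e1 := by
        rw [vec_eq, vec_eq]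
        simp only [e1, Prod.mk_add_mk, Prod.mk.injEq]
        refine ⟨by push_cast; ring, by ring⟩
      have hcv : a + (M' : ℤ) • e1 + (((i : ℕ) + 1 : ℕ) : ℤ) • e2
          = a + (M' : ℤ) • e1 + (((i : ℕ) : ℕ) : ℤ) • e2 + e2 := by
        rw [vec_eq, vec_eq]
        simp only [e2, Prod.mk_add_mk, Prod.mk.injEq]
        refine ⟨by ring, by push_cast; ring⟩
      have hdv : a + ((M' + 1 : ℕ) : ℤ) • e1 + (((i : ℕ) + 1 : ℕ) : ℤ) • e2
          = a + (M' : ℤ) • e1 + (((i : ℕ) : ℕ) : ℤ) • e2 + e1 + e2 := by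
        rw [vec_eq, vec_eq]
        simp only [e1, e2, Prod.mk_add_mk, Prod.mk.injEq]
        refine ⟨by push_cast; ring, by push_cast; ring⟩
      rw [hbv, hcv, hdv, face_case4]
      have h1 : -aSc ω12 (a + (M' : ℤ) • e1 + (((i : ℕ) : ℕ) : ℤ) • e2) - 1
          = -aSc ω12 a - (M' : ℂ) - (((i : ℕ) + 1 : ℕ) : ℂ) := by
        rw [vec_eq]
        simp only [aSc]
        push_cast
        ring
      have h2 : -aSc ω12 (a + (M' : ℤ) • e1 + (((i : ℕ) : ℕ) : ℤ) • e2)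
          = -aSc ω12 a - (M' : ℂ) - (((i : ℕ) : ℕ) : ℂ) := by
        rw [vec_eq]
        simp only [aSc]
        push_cast
        ring
      rw [h1, h2, div_mul_div_comm]
    have hsplit : (∏ i : Fin N, ∏ k : Fin (M' + 1),
        faceW q lam ω12 (extCfg N M' a t (i.castSucc, k.castSucc))
          (extCfg N M' a t (i.castSucc, k.succ)) (extCfg N M' a t (i.succ, k.castSucc))
          (extCfg N M' a t (i.succ, k.succ)) (u (N - (i : ℕ))) (v ((k : ℕ) + 1)))
        = (∏ i : Fin N, ∏ k : Fin M',
            faceW q lam ω12 (t (i.castSucc, k.castSucc)) (t (i.castSucc, k.succ))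
              (t (i.succ, k.castSucc)) (t (i.succ, k.succ)) (u (N - (i : ℕ))) (v ((k : ℕ) + 1))) *
          ∏ i : Fin N, (brak q lam (u (N - (i : ℕ)) - v (M' + 1)) / brak q lam 1 *
            (brak q lam (-aSc ω12 a - (M' : ℂ) - (((i : ℕ) + 1 : ℕ) : ℂ)) /
              brak q lam (-aSc ω12 a - (M' : ℂ) - (((i : ℕ) : ℕ) : ℂ)))) := by
      rw [← Finset.prod_mul_distrib]
      refine Finset.prod_congr rfl fun i _ => ?_
      rw [Fin.prod_univ_castSucc]
      congr 1
      · refine Finset.prod_congr rfl fun k _ => ?_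
        simp only [Fin.succ_castSucc, hs1, Fin.coe_castSucc]
      · exact hface i
    rw [hsplit, mul_comm]
    congr 1
    rw [Finset.prod_mul_distrib, mul_comm]
    congr 1
    · rw [Fin.prod_univ_eq_prod_range (fun m =>
          brak q lam (-aSc ω12 a - (M' : ℂ) - ((m + 1 : ℕ) : ℂ)) /
            brak q lam (-aSc ω12 a - (M' : ℂ) - ((m : ℕ) : ℂ))) N,
        telescope (fun m => brak q lam (-aSc ω12 a - (M' : ℂ) - ((m : ℕ) : ℂ))) hDne N]
      congr 2
      · push_cast; ring
      · push_cast; ring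
    · rw [Fin.prod_univ_eq_prod_range (fun m => brak q lam (u (N - m) - v (M' + 1)) / brak q lam 1) N,
        prod_reflect N (fun m => brak q lam (u m - v (M' + 1)) / brak q lam 1)]
  · -- big boundary holds but small fails: the forcing argument shows the product vanishes
    rw [mul_zero]
    obtain ⟨hbT, hbL, hbR, hbB⟩ := hbig
    have hT' : ∀ k : Fin (M' + 1), t (0, k) = a + ((k : ℕ) : ℤ) • e1 := by
      intro k
      have h := hbT k.castSucc
      rwa [hs1, Fin.coe_castSucc] at h
    have hL' : ∀ i : Fin (N + 1), t (i, 0) = a + ((i : ℕ) : ℤ) • e1 := by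
      intro i
      have h := hbL i
      rwa [← Fin.castSucc_zero, hs1] at h
    have hB' : ∀ k : Fin (M' + 1), t (Fin.last N, k) =
        a + ((N : ℤ) + ((k : ℕ) : ℤ) - (btmCount N x (k : ℕ) : ℤ)) • e1 +
          (btmCount N x (k : ℕ) : ℤ) • e2 := by
      intro k
      have h := hbB k.castSucc
      rwa [hs1, Fin.coe_castSucc] at h
    have hnR : ¬ (∀ i : Fin (N + 1), t (i, Fin.last M') =
        a + (M' : ℤ) • e1 + ((i : ℕ) : ℤ) • e2) :=
      fun hR' => hsm ⟨hT', hL', hR', hB'⟩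
    by_contra hP
    have hfz : ∀ (i : Fin N) (k : Fin (M' + 1)),
        faceW q lam ω12 (extCfg N M' a t (i.castSucc, k.castSucc))
          (extCfg N M' a t (i.castSucc, k.succ)) (extCfg N M' a t (i.succ, k.castSucc))
          (extCfg N M' a t (i.succ, k.succ)) (u (N - (i : ℕ))) (v ((k : ℕ) + 1)) ≠ 0 := by
      intro i k
      have h1 := Finset.prod_ne_zero_iff.1 hP i (Finset.mem_univ i)
      exact Finset.prod_ne_zero_iff.1 h1 k (Finset.mem_univ k)
    have force : ∀ j : ℕ, j ≤ N → ∀ h : N - j < N + 1,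
        t (⟨N - j, h⟩, Fin.last M') = a + (M' : ℤ) • e1 + ((N - j : ℕ) : ℤ) • e2 := by
      intro j
      induction j with
      | zero =>
        intro _ h
        have hb := hbB (Fin.last M').castSucc
        rw [hs1] at hb
        have hNh : (⟨N - 0, h⟩ : Fin (N + 1)) = Fin.last N := Fin.ext (by simp)
        rw [hNh, hb]
        simp only [Fin.coe_castSucc, Fin.val_last, hb1]
        rw [vec_eq, vec_eq]
        simp only [Nat.sub_zero, Prod.mk.injEq]
        constructor <;> push_cast <;> ring
      | succ j ih =>
        intro hj h
        have hr : N - (j + 1) < N := by omega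
        have hface := hfz ⟨N - (j + 1), hr⟩ (Fin.last M')
        rw [Fin.succ_last, hs1, hs1, hs2, hs2] at hface
        have hcs : ((⟨N - (j + 1), hr⟩ : Fin N).castSucc) =
            (⟨N - (j + 1), by omega⟩ : Fin (N + 1)) := Fin.ext rfl
        have hscc : ((⟨N - (j + 1), hr⟩ : Fin N).succ) =
            (⟨N - j, by omega⟩ : Fin (N + 1)) := Fin.ext (by simp only [Fin.val_succ]; omega)
        rw [hcs, hscc] at hface
        simp only [Fin.val_mk] at hface
        have hc := ih (by omega)
        rw [hc (by omega)] at hface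
        obtain ⟨hbe, -⟩ := face_force _ _ _ _ _ _ _ _ _ hface
          (by
            intro hcontra
            rw [vec_eq, vec_eq, Prod.mk.injEq] at hcontra
            omega)
          (by
            rw [vec_eq, vec_eq]
            simp only [e2, Prod.mk_add_mk, Prod.mk.injEq]
            constructor
            · push_cast; ring
            · push_cast; omega)
        have hkey : t ((⟨N - (j + 1), by omega⟩ : Fin (N + 1)), Fin.last M') + e1 =
            a + (M' : ℤ) • e1 + ((N - (j + 1) : ℕ) : ℤ) • e2 + e1 := by
          rw [← hbe, vec_eq, vec_eq]
          simp only [e1, Prod.mk_add_mk, Prod.mk.injEq]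
          constructor
          · push_cast; ring
          · push_cast; ring
        exact add_right_cancel hkey
    apply hnR
    intro i
    have hile : (i : ℕ) ≤ N := Nat.lt_succ_iff.mp i.isLt
    have hj := force (N - (i : ℕ)) (by omega) (by omega)
    have hiv : N - (N - (i : ℕ)) = (i : ℕ) := by omega
    simp only [hiv] at hj
    rwa [Fin.eta] at hj
  · -- small holds but big fails: impossible
    exfalso
    apply hbig
    obtain ⟨hT, hL, hR, hB⟩ := hsm
    refine ⟨?_, ?_, hs2, ?_⟩
    · intro k
      by_cases hk : (k : ℕ) < M' + 1
      · have he : (⟨(k : ℕ), hk⟩ : Fin (M' + 1)).castSucc = k := Fin.ext rfl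
        rw [← he, hs1, hT ⟨(k : ℕ), hk⟩]
        rfl
      · have hkl := k.isLt
        have hk' : k = Fin.last (M' + 1) := Fin.ext (by simp only [Fin.val_last]; omega)
        subst hk'
        rw [hs2]
        simp
    · intro i
      have h0 : ((0 : Fin (M' + 1)).castSucc : Fin (M' + 1 + 1)) = 0 := Fin.castSucc_zero
      rw [← h0, hs1, hL i]
    · intro k
      by_cases hk : (k : ℕ) < M' + 1
      · have he : (⟨(k : ℕ), hk⟩ : Fin (M' + 1)).castSucc = k := Fin.ext rfl
        rw [← he, hs1, hB ⟨(k : ℕ), hk⟩]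
        rfl
      · have hkl := k.isLt
        have hk' : k = Fin.last (M' + 1) := Fin.ext (by simp only [Fin.val_last]; omega)
        subst hk'
        rw [hs2]
        simp only [Fin.val_last, hb2]
        rw [vec_eq, vec_eq]
        congr 1
        push_cast
        ring
  · rw [mul_zero]


/-- if `x_N ≠ M`, the partition function factorizes as
`W_{M,N}(…) = ([a₂₁-M-N+1]/[a₂₁-M+1]) ∏_{j=1}^N ([u_j-v_M]/[1]) · W_{M-1,N}(…)`,
where `a₂₁ = -a₁₂`. -/
theorem statement8 (q : ℝ) (hq0 : 0 < q) (hq1 : q < 1) (lam : ℂ) (hlam : lam ≠ 0)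
    (ω12 : ℂ) (M N : ℕ) (hN : 1 ≤ N) (hNM : N ≤ M)
    (u v : ℕ → ℂ) (x : ℕ → ℕ)
    (hx1 : 1 ≤ x 1) (hxmono : ∀ j k, 1 ≤ j → j < k → k ≤ N → x j < x k)
    (hxN : x N < M) (a : ℤ × ℤ)
    (hbr1 : brak q lam 1 ≠ 0)
    (hbrA : ∀ b : ℤ × ℤ, brak q lam (aSc ω12 b) ≠ 0)
    (hbrA' : ∀ b : ℤ × ℤ, brak q lam (-aSc ω12 b) ≠ 0) :
    partW q lam ω12 M N u v x a =
      brak q lam (-aSc ω12 a - (M : ℂ) - (N : ℂ) + 1) /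
        brak q lam (-aSc ω12 a - (M : ℂ) + 1) *
      (∏ j ∈ Finset.Icc 1 N, brak q lam (u j - v M) / brak q lam 1) *
      partW q lam ω12 (M - 1) N u v x a := by
  obtain ⟨M', rfl⟩ : ∃ M', M = M' + 1 := ⟨M - 1, by omega⟩
  simp only [Nat.add_sub_cancel]
  have hbtm : ∀ m : ℕ, x N ≤ m → btmCount N x m = N := by
    intro m hm
    unfold btmCount
    rw [Finset.filter_true_of_mem, Nat.card_Icc]
    · omega
    · intro j hj
      simp only [Finset.mem_Icc] at hj
      rcases eq_or_lt_of_le hj.2 with hEq | hLt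
      · exact hEq ▸ hm
      · exact le_trans (Nat.le_of_lt (hxmono j N hj.1 hLt le_rfl)) hm
  have hb1 := hbtm M' (by omega)
  have hb2 := hbtm (M' + 1) (by omega)
  simp only [partW]
  rw [← tsum_mul_left]
  refine tsum_eq_tsum_of_ne_zero_bij (fun p => extCfg N M' a p.1)
    (fun p p' h => Subtype.ext (extCfg_inj N M' a h)) ?_
    (fun p => key_step q lam ω12 N M' u v x a hbr1 hbrA' hb1 hb2 p.1)
  intro s hs
  have hs' : ¬ _ = (0 : ℂ) := Function.mem_support.1 hs
  have hcond : (∀ k : Fin (M' + 1 + 1), s (0, k) = a + ((k : ℕ) : ℤ) • e1) ∧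
      (∀ i : Fin (N + 1), s (i, 0) = a + ((i : ℕ) : ℤ) • e1) ∧
      (∀ i : Fin (N + 1), s (i, Fin.last (M' + 1)) =
        a + ((M' + 1 : ℕ) : ℤ) • e1 + ((i : ℕ) : ℤ) • e2) ∧
      (∀ k : Fin (M' + 1 + 1), s (Fin.last N, k) =
        a + ((N : ℤ) + ((k : ℕ) : ℤ) - (btmCount N x (k : ℕ) : ℤ)) • e1 +
          (btmCount N x (k : ℕ) : ℤ) • e2) := by
    by_contra hc
    exact hs' (if_neg hc)
  set t0 : Fin (N + 1) × Fin (M' + 1) → ℤ × ℤ :=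
    fun p => s (p.1, p.2.castSucc) with ht0
  have hext : extCfg N M' a t0 = s := by
    funext p
    by_cases h2 : (p.2 : ℕ) < M' + 1
    · have hp2 : p.2 = (⟨(p.2 : ℕ), h2⟩ : Fin (M' + 1)).castSucc := Fin.ext rfl
      calc extCfg N M' a t0 p = t0 (p.1, ⟨(p.2 : ℕ), h2⟩) := by
            simp only [extCfg]
            rw [dif_pos h2]
        _ = s (p.1, p.2) := by
            simp only [ht0]
            exact congrArg s (Prod.ext rfl hp2.symm)
    · have hp2 : p.2 = Fin.last (M' + 1) := Fin.ext (by
        have := p.2.isLt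
        simp only [Fin.val_last]
        omega)
      calc extCfg N M' a t0 p = extCfg N M' a t0 (p.1, Fin.last (M' + 1)) := by
            rw [← hp2]
        _ = a + ((M' + 1 : ℕ) : ℤ) • e1 + ((p.1 : ℕ) : ℤ) • e2 := extCfg_last N M' a t0 p.1
        _ = s (p.1, Fin.last (M' + 1)) := (hcond.2.2.1 p.1).symm
        _ = s p := by rw [← hp2]
  refine ⟨⟨t0, ?_⟩, hext⟩
  rw [Function.mem_support,
    ← key_step q lam ω12 N M' u v x a hbr1 hbrA' hb1 hb2 t0, hext]
  exact hs'


end
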